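/- arXiv:1912.00723 — 2 statements merged into one kernel-verified Lean document; each statement's English description precedes it below -/
import Mathlib

section
/- In the IRL1 setting with the SR update rule and level-set boundedness, for each coordinate i: if ε_i^k → 0 as k → ∞, then liminf_{k→∞} |x_i^k| > 0. -/
open Filter Topology

/-- The weight function `w(t, s) = p(|t| + s)^(p-1)`. -/
noncomputable def wfun (p t s : ℝ) : ℝ := p * (|t| + s) ^ (p - 1)

/-- The IRL1 setting with the "smart reweighting" (SR) ε-update rule: fixed data
`p ∈ (0,1)`, `λ > 0`, `μ ∈ (0,1)`, a differentiable `f` with `Lf`-Lipschitz gradient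
(`Lf ≥ 0`), iterates `x^k`, positive parameters `ε^k` updated by the SR rule
(`ε_i^{k+1} = ε_i^k` if `x_i^{k+1} = 0`, `ε_i^{k+1} ≤ μ ε_i^k` if `x_i^{k+1} ≠ 0`),
and for each `k` a differentiable model `Q_k` with `∇Q_k(x^k) = ∇f(x^k)`,
`M`-strongly convex with `M > Lf/2` (meaning `z ↦ Q_k z - (M/2)‖z‖²` is convex),
`∇Q_k` `L`-Lipschitz, such that `x^{k+1}` globally minimizes
`G(·; x^k, ε^k) = Q_k(·) + λ Σᵢ w(xᵢ^k, εᵢ^k)|·ᵢ|`. -/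
structure IRL1SR (n : ℕ) where
  p : ℝ
  lam : ℝ
  mu : ℝ
  Lf : ℝ
  M : ℝ
  L : ℝ
  f : EuclideanSpace ℝ (Fin n) → ℝ
  x : ℕ → EuclideanSpace ℝ (Fin n)
  eps : ℕ → Fin n → ℝ
  Q : ℕ → EuclideanSpace ℝ (Fin n) → ℝ
  hp0 : 0 < p
  hp1 : p < 1
  hlam : 0 < lam
  hmu0 : 0 < mu
  hmu1 : mu < 1
  hLf : 0 ≤ Lf
  hM : Lf / 2 < M
  hf_diff : Differentiable ℝ f
  hf_lip : ∀ a b, ‖gradient f a - gradient f b‖ ≤ Lf * ‖a - b‖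
  heps_pos : ∀ k i, 0 < eps k i
  heps_SR_zero : ∀ k i, x (k + 1) i = 0 → eps (k + 1) i = eps k i
  heps_SR_nonzero : ∀ k i, x (k + 1) i ≠ 0 → eps (k + 1) i ≤ mu * eps k i
  hQ_diff : ∀ k, Differentiable ℝ (Q k)
  hQ_grad : ∀ k, gradient (Q k) (x k) = gradient f (x k)
  hQ_sconv : ∀ k, ConvexOn ℝ Set.univ (fun z => Q k z - M / 2 * ‖z‖ ^ 2)
  hQ_lip : ∀ k a b, ‖gradient (Q k) a - gradient (Q k) b‖ ≤ L * ‖a - b‖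
  hmin : ∀ k, ∀ z : EuclideanSpace ℝ (Fin n),
    Q k (x (k + 1)) + lam * ∑ i, wfun p (x k i) (eps k i) * |x (k + 1) i|
      ≤ Q k z + lam * ∑ i, wfun p (x k i) (eps k i) * |z i|

/-- The smoothed objective `F(x, ε) = f(x) + λ Σᵢ (|xᵢ| + εᵢ)^p`. -/
noncomputable def IRL1SR.Feps {n : ℕ} (S : IRL1SR n)
    (z : EuclideanSpace ℝ (Fin n)) (e : Fin n → ℝ) : ℝ :=
  S.f z + S.lam * ∑ i, (|z i| + e i) ^ S.p

/-- The objective `F(x) = f(x) + λ Σᵢ |xᵢ|^p`. -/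
noncomputable def IRL1SR.Fobj {n : ℕ} (S : IRL1SR n) (z : EuclideanSpace ℝ (Fin n)) : ℝ :=
  S.f z + S.lam * ∑ i, |z i| ^ S.p

/-- The level set `{x : F(x) ≤ F(x⁰, ε⁰)}` is bounded. -/
def IRL1SR.LevelBounded {n : ℕ} (S : IRL1SR n) : Prop :=
  Bornology.IsBounded {z : EuclideanSpace ℝ (Fin n) | S.Fobj z ≤ S.Feps (S.x 0) (S.eps 0)}

/-!
Since `x^{k+1}` minimizes the `M`-strongly convex `G_k`, the descent lemma for `f` (this is where
`M > Lf / 2` enters) and the concavity of `t ↦ t^p` make `F(x^k, ε^k)` nonincreasing. So the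
iterates stay in the bounded level set, and the gradients of the `Q_k` near them are bounded by a
constant `C`. Comparing `x^{k+1}` with the same point with its `i`-th coordinate zeroed shows that
`xᵢ^{k+1} = 0` whenever the weight `λ w(xᵢ^k, εᵢ^k)` exceeds `C`. This weight blows up as
`|xᵢ^k| + εᵢ^k → 0`; hence once `|xᵢ^k| + εᵢ^k` is small, `xᵢ` stays at zero and the SR rule
freezes `εᵢ` at a positive value, contradicting `εᵢ^k → 0`. Thus `|xᵢ^k| + εᵢ^k` is bounded away
from zero, and since `εᵢ^k → 0`, so is `|xᵢ^k|`.
-/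

open Set
open scoped RealInnerProductSpace

section Convexity

variable {E : Type*} [NormedAddCommGroup E]

theorem ConvexOn.add_le_of_hasFDerivAt [NormedSpace ℝ E] {φ : E → ℝ} {φ' : E →L[ℝ] ℝ} {y : E}
    (hφ : ConvexOn ℝ univ φ) (hd : HasFDerivAt φ φ' y) (z : E) : φ y + φ' (z - y) ≤ φ z := by
  have hline : HasDerivAt (fun t : ℝ => φ (AffineMap.lineMap y z t)) (φ' (z - y)) 0 := by
    rw [← AffineMap.lineMap_apply_zero y z (k := ℝ)] at hd
    exact hd.comp_hasDerivAt 0 AffineMap.hasDerivAt_lineMap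
  have := (hφ.comp_affineMap (AffineMap.lineMap y z)).le_slope_of_hasDerivAt (mem_univ 0)
    (mem_univ 1) one_pos hline
  rw [slope_def_field] at this
  simp only [Function.comp_apply, AffineMap.lineMap_apply_zero, AffineMap.lineMap_apply_one,
    sub_zero, div_one] at this
  linarith

variable [InnerProductSpace ℝ E]

theorem StrongConvexOn.add_le_of_hasFDerivAt {f : E → ℝ} {f' : E →L[ℝ] ℝ} {m : ℝ} {y : E}
    (hf : StrongConvexOn univ m f) (hd : HasFDerivAt f f' y) (z : E) :
    f y + f' (z - y) + m / 2 * ‖z - y‖ ^ 2 ≤ f z := by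
  have hψ := (strongConvexOn_iff_convex.1 hf).add_le_of_hasFDerivAt
    (hd.sub ((hasStrictFDerivAt_norm_sq y).hasFDerivAt.const_mul (m / 2))) z
  have hz : ‖z‖ ^ 2 = ‖y‖ ^ 2 + 2 * ⟪y, z - y⟫ + ‖z - y‖ ^ 2 := by
    rw [← norm_add_sq_real, add_sub_cancel]
  simp only [FunLike.coe_sub, FunLike.coe_smul, Pi.sub_apply, Pi.smul_apply, innerSL_apply_apply,
    smul_eq_mul] at hψ
  rw [hz, nsmul_eq_mul] at hψ
  push_cast at hψ
  linarith

theorem StrongConvexOn.add_le_of_isMinOn {f : E → ℝ} {m : ℝ} {a : E}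
    (hf : StrongConvexOn univ m f) (ha : IsMinOn f univ a) (z : E) :
    f a + m / 2 * ‖z - a‖ ^ 2 ≤ f z := by
  have hseg : ∀ t ∈ Ioc (0 : ℝ) 1, f a + (1 - t) * (m / 2 * ‖z - a‖ ^ 2) ≤ f z := by
    rintro t ⟨ht0, ht1⟩
    have hmin : f a ≤ f ((1 - t) • a + t • z) := ha (mem_univ _)
    have hconv := hf.2 (mem_univ a) (mem_univ z) (sub_nonneg.2 ht1) ht0.le (by ring)
    rw [norm_sub_rev] at hconv
    simp only [smul_eq_mul] at hconv
    nlinarith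
  have hlim : Tendsto (fun t : ℝ => f a + (1 - t) * (m / 2 * ‖z - a‖ ^ 2)) (𝓝[>] 0)
      (𝓝 (f a + m / 2 * ‖z - a‖ ^ 2)) := by
    refine tendsto_nhdsWithin_of_tendsto_nhds ?_
    simpa using (Continuous.tendsto (by fun_prop) 0 :
      Tendsto (fun t : ℝ => f a + (1 - t) * (m / 2 * ‖z - a‖ ^ 2)) (𝓝 0) _)
  exact le_of_tendsto hlim (eventually_of_mem (Ioc_mem_nhdsGT one_pos) hseg)

theorem le_add_inner_gradient_add_of_lipschitz [CompleteSpace E] {f : E → ℝ} {L : ℝ}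
    (hf : Differentiable ℝ f) (hL : ∀ a b, ‖gradient f a - gradient f b‖ ≤ L * ‖a - b‖)
    (a b : E) : f b ≤ f a + ⟪gradient f a, b - a⟫ + L / 2 * ‖b - a‖ ^ 2 := by
  set v := b - a
  have hderiv : ∀ t, HasDerivAt
      (fun t => f (a + t • v) - t * ⟪gradient f a, v⟫ - L / 2 * t ^ 2 * ‖v‖ ^ 2)
      (⟪gradient f (a + t • v), v⟫ - ⟪gradient f a, v⟫ - L * t * ‖v‖ ^ 2) t := by
    intro t
    have hline : HasDerivAt (fun s : ℝ => a + s • v) v t := by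
      simpa using ((hasDerivAt_id t).smul_const v).const_add a
    have := (((hf _).hasGradientAt.hasFDerivAt.comp_hasDerivAt t hline).sub
      ((hasDerivAt_id t).mul_const ⟪gradient f a, v⟫)).sub
        (((hasDerivAt_pow 2 t).const_mul (L / 2)).mul_const (‖v‖ ^ 2))
    refine this.congr_deriv ?_
    rw [InnerProductSpace.toDual_apply_apply]; push_cast; ring
  have hanti : AntitoneOn
      (fun t => f (a + t • v) - t * ⟪gradient f a, v⟫ - L / 2 * t ^ 2 * ‖v‖ ^ 2) (Ici 0) := by
    refine antitoneOn_of_hasDerivWithinAt_nonpos (convex_Ici 0) ?_ (fun t _ =>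
      (hderiv t).hasDerivWithinAt) ?_
    · exact fun t _ => (hderiv t).continuousAt.continuousWithinAt
    · intro t ht
      rw [interior_Ici] at ht
      have hlip : ⟪gradient f (a + t • v) - gradient f a, v⟫ ≤ L * t * ‖v‖ ^ 2 :=
        calc _ ≤ ‖gradient f (a + t • v) - gradient f a‖ * ‖v‖ := real_inner_le_norm _ _
          _ ≤ L * ‖(a + t • v) - a‖ * ‖v‖ := by gcongr; exact hL _ _
          _ = L * t * ‖v‖ ^ 2 := by
            rw [add_sub_cancel_left, norm_smul, Real.norm_of_nonneg (le_of_lt ht)]; ring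
      rw [inner_sub_left] at hlip
      linarith
  have h01 := hanti (mem_Ici.2 le_rfl) (mem_Ici.2 zero_le_one) zero_le_one
  simp only [zero_smul, add_zero, one_smul, v, add_sub_cancel] at h01
  linarith

end Convexity

theorem Real.rpow_le_add_mul_sub_of_le_one {p x y : ℝ} (hp0 : 0 ≤ p) (hp1 : p ≤ 1) (hx : 0 < x)
    (hy : 0 ≤ y) : y ^ p ≤ x ^ p + p * x ^ (p - 1) * (y - x) := by
  have hs : -1 ≤ (y - x) / x := by rw [le_div_iff₀ hx]; linarith
  have key := rpow_one_add_le_one_add_mul_self hs hp0 hp1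
  have hy' : y = x * (1 + (y - x) / x) := by field_simp; ring
  calc y ^ p = x ^ p * (1 + (y - x) / x) ^ p := by
        rw [hy', Real.mul_rpow hx.le (by linarith)]; congr 2; field_simp; ring
    _ ≤ x ^ p * (1 + p * ((y - x) / x)) := by gcongr
    _ = x ^ p + p * (x ^ p / x) * (y - x) := by field_simp
    _ = x ^ p + p * x ^ (p - 1) * (y - x) := by rw [Real.rpow_sub_one hx.ne']

section EuclideanCoordinates

variable {ι : Type*} [Fintype ι]

theorem EuclideanSpace.abs_apply_le_norm (x : EuclideanSpace ℝ ι) (i : ι) : |x i| ≤ ‖x‖ :=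
  Real.norm_eq_abs (x i) ▸ PiLp.norm_apply_le x i

theorem convexOn_sum_mul_abs {c : ι → ℝ} (hc : ∀ j, 0 ≤ c j) :
    ConvexOn ℝ univ (fun z : EuclideanSpace ℝ ι => ∑ j, c j * |z j|) := by
  refine ⟨convex_univ, fun x _ y _ a b ha hb _ => ?_⟩
  simp only [smul_eq_mul, Finset.mul_sum, ← Finset.sum_add_distrib]
  refine Finset.sum_le_sum fun j _ => ?_
  have : |a * x j + b * y j| ≤ a * |x j| + b * |y j| := by
    simpa [abs_mul, abs_of_nonneg ha, abs_of_nonneg hb] using abs_add_le (a * x j) (b * y j)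
  simp only [PiLp.add_apply, PiLp.smul_apply, smul_eq_mul]
  nlinarith [hc j]

theorem sum_mul_abs_sub_single [DecidableEq ι] (c : ι → ℝ) (z : EuclideanSpace ℝ ι) (i : ι) :
    ∑ j, c j * |(z - EuclideanSpace.single i (z i)) j| = ∑ j, c j * |z j| - c i * |z i| := by
  rw [eq_sub_iff_add_eq, ← Fintype.sum_ite_eq' i (fun j => c j * |z j|),
    ← Finset.sum_add_distrib]
  refine Finset.sum_congr rfl fun j _ => ?_
  by_cases hj : j = i
  · subst hj; simp
  · simp [hj]

end EuclideanCoordinates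

theorem exists_lt_wfun {p : ℝ} (hp0 : 0 < p) (hp1 : p < 1) (C : ℝ) :
    ∃ δ > 0, ∀ t s, 0 < s → |t| + s ≤ δ → C < wfun p t s := by
  obtain ⟨δ, hδ, hsub⟩ := mem_nhdsGT_iff_exists_Ioc_subset.1
    ((tendsto_rpow_neg_nhdsGT_zero (sub_neg.2 hp1)).eventually_gt_atTop (C / p))
  refine ⟨δ, hδ, fun t s hs hle => ?_⟩
  have : C / p < (|t| + s) ^ (p - 1) := hsub ⟨by positivity, hle⟩
  rw [wfun, ← div_lt_iff₀' hp0]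
  exact this

namespace IRL1SR

variable {n : ℕ} (S : IRL1SR n)

noncomputable def weightedL1 (k : ℕ) (z : EuclideanSpace ℝ (Fin n)) : ℝ :=
  ∑ j, wfun S.p (S.x k j) (S.eps k j) * |z j|

noncomputable def G (k : ℕ) (z : EuclideanSpace ℝ (Fin n)) : ℝ :=
  S.Q k z + S.lam * S.weightedL1 k z

theorem wfun_pos (k : ℕ) (j : Fin n) : 0 < wfun S.p (S.x k j) (S.eps k j) :=
  mul_pos S.hp0 (Real.rpow_pos_of_pos (by have := S.heps_pos k j; positivity) _)

theorem M_nonneg : 0 ≤ S.M := by linarith [S.hLf, S.hM]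

theorem strongConvexOn_Q (k : ℕ) : StrongConvexOn univ S.M (S.Q k) :=
  strongConvexOn_iff_convex.2 (S.hQ_sconv k)

theorem strongConvexOn_G (k : ℕ) : StrongConvexOn univ S.M (S.G k) := by
  have hL1 : ConvexOn ℝ univ (fun z => S.lam * S.weightedL1 k z) :=
    (convexOn_sum_mul_abs fun j => (S.wfun_pos k j).le).smul S.hlam.le
  have h := (S.strongConvexOn_Q k).add (uniformConvexOn_zero.2 hL1)
  rw [add_zero] at h
  exact h

theorem isMinOn_G (k : ℕ) : IsMinOn (S.G k) univ (S.x (k + 1)) :=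
  fun z _ => S.hmin k z

theorem eps_succ_le (k : ℕ) (j : Fin n) : S.eps (k + 1) j ≤ S.eps k j := by
  by_cases h : S.x (k + 1) j = 0
  · exact (S.heps_SR_zero k j h).le
  · nlinarith [S.heps_SR_nonzero k j h, S.heps_pos k j, S.hmu1]

theorem f_add_weightedL1_succ_le (k : ℕ) :
    S.f (S.x (k + 1)) + S.lam * S.weightedL1 k (S.x (k + 1))
      ≤ S.f (S.x k) + S.lam * S.weightedL1 k (S.x k) := by
  set a := S.x k
  set b := S.x (k + 1)
  have hG := (S.strongConvexOn_G k).add_le_of_isMinOn (S.isMinOn_G k) a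
  have hQ := (S.strongConvexOn_Q k).add_le_of_hasFDerivAt
    (S.hQ_diff k a).hasGradientAt.hasFDerivAt b
  have hf := le_add_inner_gradient_add_of_lipschitz S.hf_diff S.hf_lip a b
  rw [InnerProductSpace.toDual_apply_apply, S.hQ_grad k] at hQ
  rw [norm_sub_rev] at hG
  simp only [G] at hG
  nlinarith [S.hM, sq_nonneg ‖b - a‖]

theorem sum_rpow_le (k : ℕ) (z : EuclideanSpace ℝ (Fin n)) :
    ∑ j, (|z j| + S.eps k j) ^ S.p
      ≤ ∑ j, (|S.x k j| + S.eps k j) ^ S.p + (S.weightedL1 k z - S.weightedL1 k (S.x k)) := by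
  rw [weightedL1, weightedL1, ← Finset.sum_sub_distrib, ← Finset.sum_add_distrib]
  refine Finset.sum_le_sum fun j _ => ?_
  have := Real.rpow_le_add_mul_sub_of_le_one S.hp0.le S.hp1.le
    (by have := S.heps_pos k j; positivity : 0 < |S.x k j| + S.eps k j)
    (by have := S.heps_pos k j; positivity : 0 ≤ |z j| + S.eps k j)
  rw [wfun]
  linarith

theorem Feps_succ_le (k : ℕ) :
    S.Feps (S.x (k + 1)) (S.eps (k + 1)) ≤ S.Feps (S.x k) (S.eps k) := by
  have hdec := S.f_add_weightedL1_succ_le k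
  have hrpow := S.sum_rpow_le k (S.x (k + 1))
  have heps : ∑ j, (|S.x (k + 1) j| + S.eps (k + 1) j) ^ S.p
      ≤ ∑ j, (|S.x (k + 1) j| + S.eps k j) ^ S.p :=
    Finset.sum_le_sum fun j _ => Real.rpow_le_rpow (by have := S.heps_pos (k + 1) j; positivity)
      (by linarith [S.eps_succ_le k j]) S.hp0.le
  simp only [Feps]
  nlinarith [S.hlam]

theorem Fobj_le_Feps (z : EuclideanSpace ℝ (Fin n)) {e : Fin n → ℝ} (he : ∀ j, 0 ≤ e j) :
    S.Fobj z ≤ S.Feps z e := by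
  have : ∑ j, |z j| ^ S.p ≤ ∑ j, (|z j| + e j) ^ S.p :=
    Finset.sum_le_sum fun j _ => Real.rpow_le_rpow (abs_nonneg _)
      (le_add_of_nonneg_right (he j)) S.hp0.le
  simp only [Fobj, Feps]
  nlinarith [S.hlam]

theorem exists_forall_norm_x_le (hbdd : S.LevelBounded) : ∃ R, ∀ k, ‖S.x k‖ ≤ R := by
  obtain ⟨R, hR⟩ := isBounded_iff_forall_norm_le.1 hbdd
  exact ⟨R, fun k => hR _ ((S.Fobj_le_Feps _ fun j => (S.heps_pos k j).le).trans
    (antitone_nat_of_succ_le (f := fun k => S.Feps (S.x k) (S.eps k)) S.Feps_succ_le k.zero_le))⟩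

theorem norm_gradient_Q_le {R : ℝ} (hR : ∀ k, ‖S.x k‖ ≤ R) (k : ℕ)
    (z : EuclideanSpace ℝ (Fin n)) :
    ‖gradient (S.Q k) z‖ ≤ ‖gradient S.f (S.x 0)‖ + S.Lf * (2 * R) + |S.L| * (‖z‖ + R) := by
  have hxk : ‖S.x k - S.x 0‖ ≤ 2 * R := (norm_sub_le _ _).trans (by linarith [hR k, hR 0])
  have hzk : ‖z - S.x k‖ ≤ ‖z‖ + R := (norm_sub_le _ _).trans (by linarith [hR k])
  have hQ : ‖gradient (S.Q k) z - gradient (S.Q k) (S.x k)‖ ≤ |S.L| * (‖z‖ + R) :=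
    (S.hQ_lip k _ _).trans ((mul_le_mul_of_nonneg_right (le_abs_self _) (norm_nonneg _)).trans
      (mul_le_mul_of_nonneg_left hzk (abs_nonneg _)))
  have hf : ‖gradient S.f (S.x k) - gradient S.f (S.x 0)‖ ≤ S.Lf * (2 * R) :=
    (S.hf_lip _ _).trans (mul_le_mul_of_nonneg_left hxk S.hLf)
  have h1 := norm_le_insert' (gradient (S.Q k) z) (gradient (S.Q k) (S.x k))
  have h2 := norm_le_insert' (gradient S.f (S.x k)) (gradient S.f (S.x 0))
  rw [S.hQ_grad k] at h1 hQ
  linarith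

/-- Zeroing the `i`-th coordinate of `x^{k+1}` (giving `z`) saves `λ wᵢ |xᵢ^{k+1}|` in the
penalty and, by convexity of `Q_k`, costs at most `‖∇Q_k(z)‖ |xᵢ^{k+1}|` in `Q_k`. -/
theorem x_succ_eq_zero_of_norm_gradient_lt (k : ℕ) (i : Fin n)
    (h : ‖gradient (S.Q k) (S.x (k + 1) - EuclideanSpace.single i (S.x (k + 1) i))‖
      < S.lam * wfun S.p (S.x k i) (S.eps k i)) : S.x (k + 1) i = 0 := by
  set b := S.x (k + 1)
  set z := b - EuclideanSpace.single i (b i)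
  have hmin : S.G k b ≤ S.G k z := S.hmin k z
  have htan := ((S.strongConvexOn_Q k).convexOn fun r => by
    have := S.M_nonneg; positivity).add_le_of_hasFDerivAt
      (S.hQ_diff k z).hasGradientAt.hasFDerivAt b
  have hbz : b - z = EuclideanSpace.single i (b i) := sub_sub_cancel _ _
  rw [InnerProductSpace.toDual_apply_apply, hbz] at htan
  have hinner := neg_le_of_abs_le (abs_real_inner_le_norm (gradient (S.Q k) z)
    (EuclideanSpace.single i (b i)))
  rw [PiLp.norm_single, Real.norm_eq_abs] at hinner
  simp only [G, weightedL1, z, sum_mul_abs_sub_single] at hmin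
  by_contra hb
  have := abs_pos.2 hb
  nlinarith [mul_lt_mul_of_pos_right h this]

theorem exists_forall_x_succ_eq_zero (hbdd : S.LevelBounded) (i : Fin n) :
    ∃ C, ∀ k, C < S.lam * wfun S.p (S.x k i) (S.eps k i) → S.x (k + 1) i = 0 := by
  obtain ⟨R, hR⟩ := S.exists_forall_norm_x_le hbdd
  refine ⟨‖gradient S.f (S.x 0)‖ + S.Lf * (2 * R) + |S.L| * (2 * R + R), fun k hk =>
    S.x_succ_eq_zero_of_norm_gradient_lt k i (lt_of_le_of_lt ?_ hk)⟩
  have hz : ‖S.x (k + 1) - EuclideanSpace.single i (S.x (k + 1) i)‖ ≤ 2 * R := by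
    refine (norm_sub_le _ _).trans ?_
    rw [PiLp.norm_single, Real.norm_eq_abs]
    linarith [EuclideanSpace.abs_apply_le_norm (S.x (k + 1)) i, hR (k + 1)]
  exact (S.norm_gradient_Q_le hR k _).trans (by gcongr)

theorem eps_eq_of_abs_add_eps_le {C δ : ℝ} {i : Fin n}
    (hC : ∀ k, C < S.lam * wfun S.p (S.x k i) (S.eps k i) → S.x (k + 1) i = 0)
    (hδ : ∀ t s, 0 < s → |t| + s ≤ δ → C < S.lam * wfun S.p t s)
    {k : ℕ} (hk : |S.x k i| + S.eps k i ≤ δ) : ∀ m ≥ k, S.eps m i = S.eps k i := by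
  suffices ∀ m ≥ k, |S.x m i| + S.eps m i ≤ δ ∧ S.eps m i = S.eps k i from
    fun m hm => (this m hm).2
  refine Nat.le_induction ⟨hk, rfl⟩ fun m _ ⟨hle, heq⟩ => ?_
  have hx := hC m (hδ _ _ (S.heps_pos m i) hle)
  rw [hx, S.heps_SR_zero m i hx, heq, abs_zero, zero_add]
  exact ⟨(le_add_of_nonneg_left (abs_nonneg _)).trans hk, rfl⟩

theorem exists_forall_lt_abs_add_eps (hbdd : S.LevelBounded) (i : Fin n)
    (h0 : Tendsto (fun k => S.eps k i) atTop (𝓝 0)) :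
    ∃ δ > 0, ∀ k, δ < |S.x k i| + S.eps k i := by
  obtain ⟨C, hC⟩ := S.exists_forall_x_succ_eq_zero hbdd i
  obtain ⟨δ, hδ, hw⟩ := exists_lt_wfun S.hp0 S.hp1 (C / S.lam)
  refine ⟨δ, hδ, fun k => not_le.1 fun hk => ?_⟩
  have hconst := S.eps_eq_of_abs_add_eps_le hC
    (fun t s hs hle => (div_lt_iff₀' S.hlam).1 (hw t s hs hle)) hk
  obtain ⟨m, hm, hkm⟩ :=
    ((h0.eventually (gt_mem_nhds (S.heps_pos k i))).and (eventually_ge_atTop k)).exists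
  exact hm.ne (hconst m hkm)

end IRL1SR

/-- In the IRL1 setting with the SR update rule and bounded level
set, for each coordinate `i`: if `ε_i^k → 0`, then `liminf |x_i^k| > 0`. -/
theorem stmt15 {n : ℕ} (S : IRL1SR n) (hbdd : S.LevelBounded) (i : Fin n)
    (h0 : Tendsto (fun k => S.eps k i) atTop (nhds 0)) :
    0 < Filter.liminf (fun k => |S.x k i|) Filter.atTop := by
  obtain ⟨R, hR⟩ := S.exists_forall_norm_x_le hbdd
  obtain ⟨δ, hδ, hsep⟩ := S.exists_forall_lt_abs_add_eps hbdd i h0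
  have hfar : ∀ᶠ k in atTop, δ / 2 ≤ |S.x k i| :=
    (h0.eventually (gt_mem_nhds (half_pos hδ))).mono fun k hk => by linarith [hsep k]
  have hcobdd : IsCoboundedUnder (· ≥ ·) atTop (fun k => |S.x k i|) :=
    isCoboundedUnder_ge_of_le atTop fun k => (EuclideanSpace.abs_apply_le_norm _ i).trans (hR k)
  exact (half_pos hδ).trans_le (le_liminf_of_le hcobdd hfar)
end

section
/- Consider the IRL1 method with line search: sequences x^k ∈ ℝ^n and ε^k ∈ ℝ^n with positive entries such that ε^{k+1} ≤ μ ε^k componentwise, for each k the point x^{k+1} is a global minimizer of G(x; x^k, ε^k) := Q_k(x) + λ Σ_{i=1}^n w(x_i^k, ε_i^k)|x_i| with Q_k differentiable, ∇Q_k(x^k) = ∇f(x^k), Q_k M-strongly convex (M > 0) and ∇Q_k L-Lipschitz, and the line-search condition f(x^k) − f(x^{k+1}) ≥ Q_k(x^k) − Q_k(x^{k+1}) + γ‖x^k − x^{k+1}‖² holds with a fixed γ > 0. If the level set {x : F(x) ≤ F(x^0, ε^0)} is bounded, then F(x, ε) is monotonically nonincreasing over the iterates, F(x^0, ε^0) −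 F(x^k, ε^k) ≥ γ Σ_{t=0}^{k−1} ‖x^{t+1} − x^t‖² for all k, ‖x^{k+1} − x^k‖ → 0, and there exists C > 0 with ‖∇Q_k(x^{k+1})‖_∞ ≤ C for all k. -/
open Filter Topology

/-- The IRL1 setting with line search (Algorithm 2.2 of the paper): fixed data
`p ∈ (0,1)`, `λ > 0`, `μ ∈ (0,1)`, `γ > 0`, a differentiable `f` with
`Lf`-Lipschitz gradient (`Lf ≥ 0`), iterates `x^k`, positive parameters `ε^k` with
`ε^{k+1} ≤ μ ε^k` componentwise; for each `k` a differentiable model `Q_k` with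
`∇Q_k(x^k) = ∇f(x^k)`, `M`-strongly convex with `M > 0` (meaning
`z ↦ Q_k z - (M/2)‖z‖²` is convex), `∇Q_k` `L`-Lipschitz, such that `x^{k+1}`
globally minimizes `G(·; x^k, ε^k) = Q_k(·) + λ Σᵢ w(xᵢ^k, εᵢ^k)|·ᵢ|` and the
line-search condition
`f(x^k) - f(x^{k+1}) ≥ Q_k(x^k) - Q_k(x^{k+1}) + γ‖x^k - x^{k+1}‖²` holds. -/
structure IRL1LS (n : ℕ) where
  p : ℝ
  lam : ℝ
  mu : ℝ
  gam : ℝ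
  Lf : ℝ
  M : ℝ
  L : ℝ
  f : EuclideanSpace ℝ (Fin n) → ℝ
  x : ℕ → EuclideanSpace ℝ (Fin n)
  eps : ℕ → Fin n → ℝ
  Q : ℕ → EuclideanSpace ℝ (Fin n) → ℝ
  hp0 : 0 < p
  hp1 : p < 1
  hlam : 0 < lam
  hmu0 : 0 < mu
  hmu1 : mu < 1
  hgam : 0 < gam
  hLf : 0 ≤ Lf
  hM : 0 < M
  hf_diff : Differentiable ℝ f
  hf_lip : ∀ a b, ‖gradient f a - gradient f b‖ ≤ Lf * ‖a - b‖
  heps_pos : ∀ k i, 0 < eps k i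
  heps_dec : ∀ k i, eps (k + 1) i ≤ mu * eps k i
  hQ_diff : ∀ k, Differentiable ℝ (Q k)
  hQ_grad : ∀ k, gradient (Q k) (x k) = gradient f (x k)
  hQ_sconv : ∀ k, ConvexOn ℝ Set.univ (fun z => Q k z - M / 2 * ‖z‖ ^ 2)
  hQ_lip : ∀ k a b, ‖gradient (Q k) a - gradient (Q k) b‖ ≤ L * ‖a - b‖
  hmin : ∀ k, ∀ z : EuclideanSpace ℝ (Fin n),
    Q k (x (k + 1)) + lam * ∑ i, wfun p (x k i) (eps k i) * |x (k + 1) i|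
      ≤ Q k z + lam * ∑ i, wfun p (x k i) (eps k i) * |z i|
  hls : ∀ k, f (x k) - f (x (k + 1)) ≥
    Q k (x k) - Q k (x (k + 1)) + gam * ‖x k - x (k + 1)‖ ^ 2

/-- The smoothed objective `F(x, ε) = f(x) + λ Σᵢ (|xᵢ| + εᵢ)^p`. -/
noncomputable def IRL1LS.Feps {n : ℕ} (S : IRL1LS n)
    (z : EuclideanSpace ℝ (Fin n)) (e : Fin n → ℝ) : ℝ :=
  S.f z + S.lam * ∑ i, (|z i| + e i) ^ S.p

/-- The objective `F(x) = f(x) + λ Σᵢ |xᵢ|^p`. -/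
noncomputable def IRL1LS.Fobj {n : ℕ} (S : IRL1LS n) (z : EuclideanSpace ℝ (Fin n)) : ℝ :=
  S.f z + S.lam * ∑ i, |z i| ^ S.p

/-!
Since `t ↦ t ^ p` is concave on `[0, ∞)`, its tangent line at `|xᵢᵏ| + εᵢᵏ` majorizes it, so
`F(·, εᵏ)` exceeds `F(xᵏ, εᵏ)` by at most the increase of `f` plus `λ` times the increase of
the weighted `ℓ¹` term of `G(·; xᵏ, εᵏ)`. Minimality of `xᵏ⁺¹` for `G` trades the weighted
term for `Qₖ(xᵏ) - Qₖ(xᵏ⁺¹)`, the line search then gives the sufficient decrease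
`F(xᵏ⁺¹, εᵏ⁺¹) ≤ F(xᵏ, εᵏ) - γ‖xᵏ⁺¹ - xᵏ‖²` (using `εᵏ⁺¹ ≤ εᵏ`), and telescoping gives the
summed bound. As `F(·) ≤ F(·, ε)`, the iterates stay in the bounded level set, where the
continuous `f` is bounded below; hence `Σ ‖xᵏ⁺¹ - xᵏ‖² < ∞`. Finally
`∇Qₖ(xᵏ⁺¹)` is within `L‖xᵏ⁺¹ - xᵏ‖` of `∇Qₖ(xᵏ) = ∇f(xᵏ)`, which is bounded on bounded sets.
-/

open Finset

lemma rpow_le_rpow_add_mul_sub {p u v : ℝ} (hp0 : 0 ≤ p) (hp1 : p ≤ 1) (hu : 0 < u)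
    (hv : 0 ≤ v) : v ^ p ≤ u ^ p + p * u ^ (p - 1) * (v - u) := by
  have hs : -1 ≤ (v - u) / u := by
    rw [neg_le, ← neg_div, div_le_one hu]; linarith
  have hv' : v = u * (1 + (v - u) / u) := by field_simp; ring
  calc v ^ p = u ^ p * (1 + (v - u) / u) ^ p := by
        rw [← Real.mul_rpow hu.le (by linarith), ← hv']
    _ ≤ u ^ p * (1 + p * ((v - u) / u)) :=
        mul_le_mul_of_nonneg_left (rpow_one_add_le_one_add_mul_self hs hp0 hp1)
          (Real.rpow_nonneg hu.le p)
    _ = u ^ p + p * u ^ (p - 1) * (v - u) := by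
        rw [Real.rpow_sub_one hu.ne' p]; field_simp

lemma rpow_abs_add_le_add_wfun_mul {p e : ℝ} (hp0 : 0 ≤ p) (hp1 : p ≤ 1) (he : 0 < e)
    (s t : ℝ) : (|s| + e) ^ p ≤ (|t| + e) ^ p + wfun p t e * (|s| - |t|) := by
  have h := rpow_le_rpow_add_mul_sub hp0 hp1 (u := |t| + e) (v := |s| + e)
    (by positivity) (by positivity)
  rw [wfun]
  linarith

lemma sum_rpow_abs_add_le {ι : Type*} [Fintype ι] {p : ℝ} (hp0 : 0 ≤ p) (hp1 : p ≤ 1)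
    {e : ι → ℝ} (he : ∀ i, 0 < e i) (y z : ι → ℝ) :
    ∑ i, (|z i| + e i) ^ p ≤ ∑ i, (|y i| + e i) ^ p +
      (∑ i, wfun p (y i) (e i) * |z i| - ∑ i, wfun p (y i) (e i) * |y i|) := by
  rw [← sum_sub_distrib, ← sum_add_distrib]
  refine sum_le_sum fun i _ => ?_
  linarith [rpow_abs_add_le_add_wfun_mul hp0 hp1 (he i) (z i) (y i)]

lemma tendsto_atTop_zero_of_sum_sq_le {d : ℕ → ℝ} {B : ℝ} (hd : ∀ t, 0 ≤ d t)
    (hB : ∀ k, ∑ t ∈ range k, d t ^ 2 ≤ B) : Tendsto d atTop (𝓝 0) := by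
  have hsq := (summable_of_sum_range_le (fun t => sq_nonneg (d t)) hB).tendsto_atTop_zero
  simpa [Real.sqrt_sq (hd _)] using hsq.sqrt

namespace IRL1LS

variable {n : ℕ} (S : IRL1LS n)

lemma Feps_mono (z : EuclideanSpace ℝ (Fin n)) {e e' : Fin n → ℝ} (he : ∀ i, 0 ≤ e i)
    (hee' : ∀ i, e i ≤ e' i) : S.Feps z e ≤ S.Feps z e' := by
  unfold Feps
  gcongr
  · exact S.hlam.le
  · exact add_nonneg (abs_nonneg _) (he i)
  · exact S.hp0.le
  · exact hee' i

lemma f_le_Fobj (z : EuclideanSpace ℝ (Fin n)) : S.f z ≤ S.Fobj z :=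
  le_add_of_nonneg_right <| mul_nonneg S.hlam.le <|
    sum_nonneg fun _ _ => Real.rpow_nonneg (abs_nonneg _) _

lemma Fobj_le_Feps (z : EuclideanSpace ℝ (Fin n)) {e : Fin n → ℝ} (he : ∀ i, 0 ≤ e i) :
    S.Fobj z ≤ S.Feps z e := by
  simpa [Fobj, Feps] using S.Feps_mono z (e := 0) (fun _ => le_rfl) he

lemma eps_succ_le (k : ℕ) (i : Fin n) : S.eps (k + 1) i ≤ S.eps k i :=
  (S.heps_dec k i).trans <| mul_le_of_le_one_left (S.heps_pos k i).le S.hmu1.le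

lemma Feps_succ_le (k : ℕ) :
    S.Feps (S.x (k + 1)) (S.eps (k + 1)) ≤
      S.Feps (S.x k) (S.eps k) - S.gam * ‖S.x (k + 1) - S.x k‖ ^ 2 := by
  have hε := S.Feps_mono (S.x (k + 1)) (fun i => (S.heps_pos (k + 1) i).le) (S.eps_succ_le k)
  have hmaj := mul_le_mul_of_nonneg_left
    (sum_rpow_abs_add_le S.hp0.le S.hp1.le (S.heps_pos k) (S.x k) (S.x (k + 1))) S.hlam.le
  have hmin := S.hmin k (S.x k)
  have hls := S.hls k
  rw [norm_sub_rev] at hls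
  unfold Feps at *
  linarith

lemma Feps_antitone : Antitone fun k => S.Feps (S.x k) (S.eps k) :=
  antitone_nat_of_succ_le fun k =>
    (S.Feps_succ_le k).trans <| sub_le_self _ <| mul_nonneg S.hgam.le (sq_nonneg _)

lemma gam_mul_sum_le_Feps_sub (k : ℕ) :
    S.gam * ∑ t ∈ range k, ‖S.x (t + 1) - S.x t‖ ^ 2 ≤
      S.Feps (S.x 0) (S.eps 0) - S.Feps (S.x k) (S.eps k) := by
  induction k with
  | zero => simp
  | succ k ih =>
    rw [sum_range_succ, mul_add]
    linarith [S.Feps_succ_le k]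

lemma Fobj_x_le (k : ℕ) : S.Fobj (S.x k) ≤ S.Feps (S.x 0) (S.eps 0) :=
  (S.Fobj_le_Feps _ fun i => (S.heps_pos k i).le).trans (S.Feps_antitone k.zero_le)

section BoundedLevelSet

variable {S}
variable (hbdd : Bornology.IsBounded
  {z : EuclideanSpace ℝ (Fin n) | S.Fobj z ≤ S.Feps (S.x 0) (S.eps 0)})
include hbdd

lemma exists_forall_norm_x_le : ∃ R, ∀ k, ‖S.x k‖ ≤ R := by
  obtain ⟨R, hR⟩ := isBounded_iff_forall_norm_le.mp hbdd
  exact ⟨R, fun k => hR _ (S.Fobj_x_le k)⟩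

lemma bddBelow_range_Feps : BddBelow (Set.range fun k => S.Feps (S.x k) (S.eps k)) := by
  obtain ⟨m, hm⟩ := hbdd.isCompact_closure.bddBelow_image S.hf_diff.continuous.continuousOn
  refine ⟨m, ?_⟩
  rintro _ ⟨k, rfl⟩
  calc m ≤ S.f (S.x k) := hm ⟨S.x k, subset_closure (S.Fobj_x_le k), rfl⟩
    _ ≤ S.Fobj (S.x k) := S.f_le_Fobj _
    _ ≤ S.Feps (S.x k) (S.eps k) := S.Fobj_le_Feps _ fun i => (S.heps_pos k i).le

lemma tendsto_norm_x_succ_sub : Tendsto (fun k => ‖S.x (k + 1) - S.x k‖) atTop (𝓝 0) := by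
  obtain ⟨m, hm⟩ := bddBelow_range_Feps hbdd
  refine tendsto_atTop_zero_of_sum_sq_le (fun _ => norm_nonneg _)
    (B := (S.Feps (S.x 0) (S.eps 0) - m) / S.gam) fun k => ?_
  rw [le_div_iff₀' S.hgam]
  linarith [S.gam_mul_sum_le_Feps_sub k, hm ⟨k, rfl⟩]

end BoundedLevelSet

lemma norm_gradient_Q_x_succ_le {R : ℝ} (hR : ∀ k, ‖S.x k‖ ≤ R) (k : ℕ) :
    ‖gradient (S.Q k) (S.x (k + 1))‖ ≤ ‖gradient S.f 0‖ + S.Lf * R + |S.L| * (2 * R) := by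
  have hf : ‖gradient S.f (S.x k)‖ ≤ ‖gradient S.f 0‖ + S.Lf * ‖S.x k‖ := by
    have hlip := S.hf_lip (S.x k) 0
    rw [sub_zero] at hlip
    linarith [norm_le_norm_add_norm_sub' (gradient S.f (S.x k)) (gradient S.f 0)]
  have hQ : ‖gradient (S.Q k) (S.x (k + 1)) - gradient (S.Q k) (S.x k)‖ ≤
      |S.L| * (‖S.x (k + 1)‖ + ‖S.x k‖) :=
    (S.hQ_lip k _ _).trans <|
      mul_le_mul (le_abs_self _) (norm_sub_le _ _) (norm_nonneg _) (abs_nonneg _)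
  calc ‖gradient (S.Q k) (S.x (k + 1))‖
      ≤ ‖gradient (S.Q k) (S.x k)‖ + ‖gradient (S.Q k) (S.x (k + 1)) - gradient (S.Q k) (S.x k)‖ :=
        norm_le_norm_add_norm_sub' _ _
    _ ≤ ‖gradient S.f 0‖ + S.Lf * ‖S.x k‖ + |S.L| * (‖S.x (k + 1)‖ + ‖S.x k‖) := by
        rw [← S.hQ_grad k] at hf; exact add_le_add hf hQ
    _ ≤ ‖gradient S.f 0‖ + S.Lf * R + |S.L| * (2 * R) := by
        have := S.hLf
        gcongr <;> linarith [hR k, hR (k + 1)]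

end IRL1LS

/-- For the IRL1 method with line search, if the level set
`{x : F(x) ≤ F(x⁰, ε⁰)}` is bounded, then `F(x, ε)` is monotonically nonincreasing
over the iterates, `F(x⁰, ε⁰) - F(x^k, ε^k) ≥ γ Σ_{t<k} ‖x^{t+1} - x^t‖²` for all
`k`, `‖x^{k+1} - x^k‖ → 0`, and there is `C > 0` with `‖∇Q_k(x^{k+1})‖_∞ ≤ C`
for all `k`. -/
theorem stmt18 {n : ℕ} (S : IRL1LS n)
    (hbdd : Bornology.IsBounded
      {z : EuclideanSpace ℝ (Fin n) | S.Fobj z ≤ S.Feps (S.x 0) (S.eps 0)}) :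
    Antitone (fun k => S.Feps (S.x k) (S.eps k)) ∧
    (∀ k : ℕ, S.Feps (S.x 0) (S.eps 0) - S.Feps (S.x k) (S.eps k) ≥
      S.gam * ∑ t ∈ Finset.range k, ‖S.x (t + 1) - S.x t‖ ^ 2) ∧
    Tendsto (fun k : ℕ => ‖S.x (k + 1) - S.x k‖) atTop (nhds 0) ∧
    ∃ C > (0 : ℝ), ∀ (k : ℕ) (i : Fin n), |gradient (S.Q k) (S.x (k + 1)) i| ≤ C := by
  obtain ⟨R, hR⟩ := S.exists_forall_norm_x_le hbdd
  have hR0 : 0 ≤ R := (norm_nonneg _).trans (hR 0)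
  refine ⟨S.Feps_antitone, S.gam_mul_sum_le_Feps_sub, S.tendsto_norm_x_succ_sub hbdd,
    ‖gradient S.f 0‖ + S.Lf * R + |S.L| * (2 * R) + 1, ?_, fun k i => ?_⟩
  · have := mul_nonneg S.hLf hR0
    positivity
  calc |gradient (S.Q k) (S.x (k + 1)) i| ≤ ‖gradient (S.Q k) (S.x (k + 1))‖ :=
        (Real.norm_eq_abs _).symm.trans_le (PiLp.norm_apply_le _ _)
    _ ≤ ‖gradient S.f 0‖ + S.Lf * R + |S.L| * (2 * R) := S.norm_gradient_Q_x_succ_le hR k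
    _ ≤ _ := le_add_of_nonneg_right zero_le_one
end
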